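/- Let n be a positive integer and let R_n be the dihedral quandle of order n. A bijection f : ℤ/nℤ → ℤ/nℤ is a quandle automorphism of R_n if and only if there exist a ∈ ℤ/nℤ and u ∈ (ℤ/nℤ)ˣ such that f(x) = a + u·x for all x ∈ ℤ/nℤ. Consequently, Aut(R_n) is isomorphic as a group to the holomorph ℤ/nℤ ⋊ (ℤ/nℤ)ˣ via T_{a,u} ↦ (a,u). -/

import Mathlib

/-- The group homomorphism `AddAut A →* MulAut (Multiplicative A)`. -/
def addAutToMulAut (A : Type*) [AddZeroClass A] :
    Multiplicative (AddAut A) →* MulAut (Multiplicative A) where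
  toFun e := AddEquiv.toMultiplicative (Multiplicative.toAdd e)
  map_one' := rfl
  map_mul' _ _ := rfl

/-- The action of `(ℤ/nℤ)ˣ` on `ℤ/nℤ` (written multiplicatively) by multiplication. -/
def holAction (n : ℕ) : (ZMod n)ˣ →* MulAut (Multiplicative (ZMod n)) :=
  (addAutToMulAut (ZMod n)).comp (DistribMulAction.toAddAut (ZMod n)ˣ (ZMod n))

/-- The holomorph `ℤ/nℤ ⋊ (ℤ/nℤ)ˣ`, where the unit group acts by multiplication. -/
abbrev Hol (n : ℕ) := SemidirectProduct (Multiplicative (ZMod n)) (ZMod n)ˣ (holAction n)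

/-- The automorphism group of the dihedral quandle `R_n` (with `s_g(h) = 2h - g`),
as a subgroup of the symmetric group of `ℤ/nℤ`. -/
def DihedralAut (n : ℕ) : Subgroup (Equiv.Perm (ZMod n)) where
  carrier := {ψ : Equiv.Perm (ZMod n) | ∀ g h : ZMod n, ψ (2 * h - g) = 2 * ψ h - ψ g}
  one_mem' := by intro g h; simp
  mul_mem' := by
    intro ψ χ hψ hχ g h
    simp only [Equiv.Perm.mul_apply, hχ g h, hψ (χ g) (χ h)]
  inv_mem' := by
    intro ψ hψ g h
    have key := hψ (ψ⁻¹ g) (ψ⁻¹ h)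
    simp only [Equiv.Perm.coe_inv, Equiv.apply_symm_apply] at key
    rw [← key, Equiv.Perm.coe_inv, Equiv.symm_apply_apply]

/-- The affine transformation `T_{a,u} : x ↦ a + u·x` of `ℤ/nℤ`, as a bijection. -/
def T (n : ℕ) (a : ZMod n) (u : (ZMod n)ˣ) : Equiv.Perm (ZMod n) where
  toFun x := a + (u : ZMod n) * x
  invFun x := ((u⁻¹ : (ZMod n)ˣ) : ZMod n) * (x - a)
  left_inv x := by simp
  right_inv x := by simp

lemma T_mem (n : ℕ) (a : ZMod n) (u : (ZMod n)ˣ) : T n a u ∈ DihedralAut n := by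
  intro g h
  show a + (u : ZMod n) * (2 * h - g) = 2 * (a + (u : ZMod n) * h) - (a + (u : ZMod n) * g)
  ring

/- Auxiliary lemmas -/

lemma T_apply (n : ℕ) (a : ZMod n) (u : (ZMod n)ˣ) (x : ZMod n) :
    T n a u x = a + (u : ZMod n) * x := rfl

/-- Every dihedral quandle automorphism is affine: `f x = f 0 + (f 1 - f 0) * x`. -/
lemma aut_affine (n : ℕ) (hn : 0 < n) (f : Equiv.Perm (ZMod n))
    (hf : ∀ g h : ZMod n, f (2 * h - g) = 2 * f h - f g) :
    ∀ x : ZMod n, f x = f 0 + (f 1 - f 0) * x := by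
  haveI : NeZero n := ⟨hn.ne'⟩
  have hstep : ∀ k : ZMod n, f (k + 2) = f k + 2 * (f 1 - f 0) := by
    intro k
    have h2 := hf k 0
    rw [show (2 * 0 - k : ZMod n) = -k by ring] at h2
    have h1 := hf (-k) 1
    rw [show (2 * 1 - -k : ZMod n) = k + 2 by ring, h2] at h1
    rw [h1]; ring
  have key : ∀ m : ℕ, f (m : ZMod n) = f 0 + (f 1 - f 0) * m := by
    intro m
    induction m using Nat.strong_induction_on with
    | _ m ih =>
      match m with
      | 0 => simp
      | 1 => push_cast; ring
      | (k+2) =>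
        have hk := ih k (by omega)
        have := hstep (k : ZMod n)
        push_cast
        rw [this, hk]; ring
  intro x
  obtain ⟨m, rfl⟩ := ZMod.natCast_rightInverse.surjective x
  exact key m

lemma aut_exists_affine (n : ℕ) (hn : 0 < n) (f : Equiv.Perm (ZMod n))
    (hf : ∀ g h : ZMod n, f (2 * h - g) = 2 * f h - f g) :
    ∃ (a : ZMod n) (u : (ZMod n)ˣ), ∀ x : ZMod n, f x = a + (u : ZMod n) * x := by
  haveI : NeZero n := ⟨hn.ne'⟩
  have haff := aut_affine n hn f hf
  have hinj : Function.Injective (fun x : ZMod n => (f 1 - f 0) * x) := by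
    intro x y hxy
    apply f.injective
    rw [haff x, haff y]
    simpa using hxy
  obtain ⟨y, hy⟩ := Finite.surjective_of_injective hinj 1
  have hu : IsUnit (f 1 - f 0) := IsUnit.of_mul_eq_one y hy
  exact ⟨f 0, hu.unit, fun x => by rw [haff x, IsUnit.unit_spec]⟩

/-- The homomorphism `Hol n →* DihedralAut n`, `(a, u) ↦ T_{a,u}`. -/
def phi (n : ℕ) : Hol n →* DihedralAut n where
  toFun p := ⟨T n p.left.toAdd p.right, T_mem n _ _⟩
  map_one' := by
    apply Subtype.ext; apply Equiv.ext; intro x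
    simp [T_apply]
  map_mul' p q := by
    apply Subtype.ext; apply Equiv.ext; intro x
    show T n (p * q).left.toAdd (p * q).right x = T n _ _ (T n _ _ x)
    simp only [T_apply, SemidirectProduct.mul_left, SemidirectProduct.mul_right]
    show p.left.toAdd + (p.right : ZMod n) * q.left.toAdd +
        ((p.right * q.right : (ZMod n)ˣ) : ZMod n) * x = _
    push_cast
    ring

lemma phi_bijective (n : ℕ) (hn : 0 < n) : Function.Bijective (phi n) := by
  constructor
  · intro p q hpq
    have h : ∀ x, T n p.left.toAdd p.right x = T n q.left.toAdd q.right x := fun x =>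
      congrArg (fun (e : DihedralAut n) => (e : Equiv.Perm (ZMod n)) x) hpq
    have h0 := h 0
    have h1 := h 1
    simp only [T_apply, mul_zero, add_zero, mul_one] at h0 h1
    rw [h0] at h1
    have hr : p.right = q.right := Units.ext (add_left_cancel h1)
    ext
    · exact h0
    · exact congrArg Units.val hr
  · rintro ⟨ψ, hψ⟩
    obtain ⟨a, u, hfa⟩ := aut_exists_affine n hn ψ hψ
    refine ⟨⟨Multiplicative.ofAdd a, u⟩, ?_⟩
    apply Subtype.ext; apply Equiv.ext; intro x
    rw [hfa x]; rfl

/-- A bijection of `ℤ/nℤ` is an automorphism of the dihedral quandle `R_n` if and only if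
it is an affine map `x ↦ a + u·x` with `a ∈ ℤ/nℤ`, `u ∈ (ℤ/nℤ)ˣ`; consequently
`Aut(R_n)` is isomorphic to the holomorph `ℤ/nℤ ⋊ (ℤ/nℤ)ˣ` via `T_{a,u} ↦ (a, u)`. -/
theorem stmt_5 (n : ℕ) (hn : 0 < n) :
    (∀ f : Equiv.Perm (ZMod n),
      (∀ g h : ZMod n, f (2 * h - g) = 2 * f h - f g) ↔
        ∃ (a : ZMod n) (u : (ZMod n)ˣ), ∀ x : ZMod n, f x = a + (u : ZMod n) * x) ∧
    ∃ e : DihedralAut n ≃* Hol n,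
      ∀ (a : ZMod n) (u : (ZMod n)ˣ),
        e ⟨T n a u, T_mem n a u⟩ = (⟨Multiplicative.ofAdd a, u⟩ : Hol n) := by
  constructor
  · intro f
    constructor
    · exact aut_exists_affine n hn f
    · rintro ⟨a, u, hf⟩ g h
      rw [hf, hf, hf]; ring
  · refine ⟨(MulEquiv.ofBijective (phi n) (phi_bijective n hn)).symm, fun a u => ?_⟩
    have : phi n ⟨Multiplicative.ofAdd a, u⟩ = ⟨T n a u, T_mem n a u⟩ := rfl
    rw [← this]
    exact (MulEquiv.ofBijective (phi n) (phi_bijective n hn)).symm_apply_apply _
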